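/- arXiv:1708.02059 — 2 statements merged into one kernel-verified Lean document; each statement's English description precedes it below -/
import Mathlib

section
/- Let F: ℝ → ℝ₊ be an even function with F(0)=0, nondecreasing on [0,∞), not identically zero, with t ↦ F(t)/t nonincreasing on (0,∞), and whose right derivative at 0 exists. Then F'₊(0) > 0. -/
/-! The difference quotients `F x / x` decrease in `x` and tend to `D` as `x → 0⁺`, so `D` bounds
every `F t / t` from above; evenness provides a `t > 0` with `F t > 0`. -/

open Filter Set Topology

theorem div_le_of_hasDerivWithinAt_of_antitoneOn_div {F : ℝ → ℝ} {D t : ℝ} (h0 : F 0 = 0)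
    (hratio : AntitoneOn (fun t => F t / t) (Ioi 0)) (hderiv : HasDerivWithinAt F D (Ici 0) 0)
    (ht : 0 < t) : F t / t ≤ D := by
  have hslope : Tendsto (fun x => F x / x) (𝓝[>] 0) (𝓝 D) := by
    have := (hasDerivWithinAt_iff_tendsto_slope' self_notMem_Ioi).mp
      (hasDerivWithinAt_Ioi_iff_Ici.mpr hderiv)
    simpa only [slope_fun_def_field, h0, sub_zero] using this
  refine ge_of_tendsto hslope ?_
  filter_upwards [Ioo_mem_nhdsGT ht] with x hx
  exact hratio hx.1 ht hx.2.le

theorem right_deriv_pos_general (F : ℝ → ℝ) (D : ℝ)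
    (hnonneg : ∀ t, 0 ≤ F t)
    (heven : ∀ t, F (-t) = F t)
    (h0 : F 0 = 0)
    (hnontriv : ∃ t, F t ≠ 0)
    (hratio : AntitoneOn (fun t => F t / t) (Set.Ioi 0))
    (hderiv : HasDerivWithinAt F D (Set.Ici 0) 0) :
    0 < D := by
  obtain ⟨t, ht⟩ := hnontriv
  have habs_pos : 0 < |t| := abs_pos.mpr fun h => ht (h ▸ h0)
  have hF_abs : F |t| = F t := by
    rcases abs_choice t with h | h <;> rw [h]
    exact heven t
  have hpos : 0 < F |t| / |t| := div_pos (hF_abs ▸ (hnonneg t).lt_of_ne' ht) habs_pos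
  exact hpos.trans_le (div_le_of_hasDerivWithinAt_of_antitoneOn_div h0 hratio hderiv habs_pos)

theorem right_deriv_pos (F : ℝ → ℝ) (D : ℝ)
    (hnonneg : ∀ t, 0 ≤ F t)
    (heven : ∀ t, F (-t) = F t)
    (h0 : F 0 = 0)
    (hnontriv : ∃ t, F t ≠ 0)
    (hmono : MonotoneOn F (Set.Ici 0))
    (hratio : AntitoneOn (fun t => F t / t) (Set.Ioi 0))
    (hderiv : HasDerivWithinAt F D (Set.Ici 0) 0) :
    0 < D :=
  right_deriv_pos_general F D hnonneg heven h0 hnontriv hratio hderiv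
end

section
/- Let ζ > 0, β > 0 with βζ < 1/2, and let F be the MCP function F(t) = |t| − ζt² for |t| ≤ 1/(2ζ), F(t) = 1/(4ζ) otherwise. For every v ∈ ℝ, the function x ↦ βF(x) + (1/2)(x−v)² is strictly convex and its unique minimizer is given by: 0 if |v| < β; (v − β·sign(v))/(1 − 2βζ) if β ≤ |v| ≤ 1/(2ζ); and v if |v| > 1/(2ζ) (the firm-shrinkage operator). -/
noncomputable def mcp (ζ : ℝ) (t : ℝ) : ℝ :=
  if |t| ≤ 1 / (2 * ζ) then |t| - ζ * t ^ 2 else 1 / (4 * ζ)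

noncomputable def firmShrinkage (ζ β : ℝ) (v : ℝ) : ℝ :=
  if |v| < β then 0
  else if |v| ≤ 1 / (2 * ζ) then (v - β * Real.sign v) / (1 - 2 * β * ζ)
  else v

/-!
Since `mcp ζ t + ζ t² = |t| + ζ (|t| - 1/(2ζ))₊²`, the objective is a convex function plus the
strictly convex quadratic `(1/2 - βζ) x²`. For minimality, `mcp ζ` lies above every parabola
`s x - ζ x²` with `|s| ≤ 1` and touches it wherever `s x = |x| ≤ 1/(2ζ)`. Replacing `mcp ζ` by
such a parabola leaves a quadratic in `x`; choosing `s = v/β` (when `|v| ≤ β`) or `s = sign v`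
(when `β ≤ |v| ≤ 1/(2ζ)`) puts its vertex at the touching point, which is the firm-shrinkage
value. For `|v| > 1/(2ζ)` no parabola works; there one compares directly, using
`mcp ζ t = 1/(4ζ) - ζ (1/(2ζ) - |t|)²` for `|t| ≤ 1/(2ζ)`.
-/

open Set

theorem mcp_add_mul_sq {ζ : ℝ} (hζ : ζ ≠ 0) (t : ℝ) :
    mcp ζ t + ζ * t ^ 2 = |t| + ζ * max (|t| - 1 / (2 * ζ)) 0 ^ 2 := by
  rw [mcp]
  split_ifs with h
  · rw [max_eq_right (by linarith)]
    ring
  · rw [max_eq_left (by linarith), ← sq_abs t]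
    field_simp
    ring

theorem convexOn_mcp_add_mul_sq {ζ : ℝ} (hζ : 0 < ζ) :
    ConvexOn ℝ univ (fun t => mcp ζ t + ζ * t ^ 2) := by
  have habs : ConvexOn ℝ univ (fun t : ℝ => |t|) :=
    (convexOn_norm convex_univ).congr fun t _ => Real.norm_eq_abs t
  have hexcess : ConvexOn ℝ univ (fun t : ℝ => max (|t| - 1 / (2 * ζ)) 0) :=
    (habs.add_const _).sup (convexOn_const 0 convex_univ)
  have hsq := (hexcess.pow (fun t _ => le_max_right _ 0) 2).smul hζ.le
  simp_rw [mcp_add_mul_sq hζ.ne']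
  exact habs.add hsq

theorem mul_sub_mul_sq_le_mcp {ζ s : ℝ} (hζ : 0 < ζ) (hs : |s| ≤ 1) (t : ℝ) :
    s * t - ζ * t ^ 2 ≤ mcp ζ t := by
  have hst : s * t ≤ |t| := by
    calc s * t ≤ |s * t| := le_abs_self _
      _ = |s| * |t| := abs_mul s t
      _ ≤ |t| := mul_le_of_le_one_left (abs_nonneg t) hs
  linarith [mcp_add_mul_sq hζ.ne' t, mul_nonneg hζ.le (sq_nonneg (max (|t| - 1 / (2 * ζ)) 0))]

theorem strictConvexOn_univ_quadratic {a : ℝ} (ha : 0 < a) (b c : ℝ) :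
    StrictConvexOn ℝ univ (fun x => a * x ^ 2 + b * x + c) := by
  refine ⟨convex_univ, fun x _ y _ hxy μ ν hμ hν hμν => ?_⟩
  have hgap : 0 < a * (μ * ν * (x - y) ^ 2) :=
    mul_pos ha (mul_pos (mul_pos hμ hν) (sq_pos_of_ne_zero (sub_ne_zero.2 hxy)))
  obtain rfl : ν = 1 - μ := by linarith
  simp only [smul_eq_mul]
  linear_combination hgap

noncomputable def mcpProxObj (ζ β v x : ℝ) : ℝ :=
  β * mcp ζ x + 1 / 2 * (x - v) ^ 2

section

variable {ζ β v : ℝ}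

theorem strictConvexOn_mcpProxObj (hζ : 0 < ζ) (hβ : 0 ≤ β) (hβζ : β * ζ < 1 / 2) :
    StrictConvexOn ℝ univ (mcpProxObj ζ β v) := by
  have hpen := (convexOn_mcp_add_mul_sq hζ).smul hβ
  have hquad := strictConvexOn_univ_quadratic (a := 1 / 2 - β * ζ) (by linarith) (-v) (v ^ 2 / 2)
  have hsplit : mcpProxObj ζ β v
      = fun x => β • (mcp ζ x + ζ * x ^ 2) + ((1 / 2 - β * ζ) * x ^ 2 + -v * x + v ^ 2 / 2) := by
    ext x
    simp only [mcpProxObj, smul_eq_mul]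
    ring
  rw [hsplit]
  exact hpen.add_strictConvexOn hquad

theorem mcpProxObj_lt_of_tangent (hζ : 0 < ζ) (hβ : 0 ≤ β) (hβζ : β * ζ < 1 / 2) {s p x : ℝ}
    (hs : |s| ≤ 1) (hp : mcp ζ p = s * p - ζ * p ^ 2) (hvertex : (1 - 2 * β * ζ) * p = v - β * s)
    (hx : x ≠ p) : mcpProxObj ζ β v p < mcpProxObj ζ β v x := by
  have hminor : β * (s * x - ζ * x ^ 2) ≤ β * mcp ζ x :=
    mul_le_mul_of_nonneg_left (mul_sub_mul_sq_le_mcp hζ hs x) hβ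
  have hexpand : β * (s * x - ζ * x ^ 2) + 1 / 2 * (x - v) ^ 2
      = mcpProxObj ζ β v p + (1 / 2 - β * ζ) * (x - p) ^ 2 := by
    rw [mcpProxObj, hp]
    linear_combination (x - p) * hvertex
  have hgap : 0 < (1 / 2 - β * ζ) * (x - p) ^ 2 :=
    mul_pos (by linarith) (sq_pos_of_ne_zero (sub_ne_zero.2 hx))
  unfold mcpProxObj at hexpand ⊢
  linarith

theorem mcpProxObj_zero_lt (hζ : 0 < ζ) (hβ : 0 < β) (hβζ : β * ζ < 1 / 2) (hv : |v| ≤ β)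
    {x : ℝ} (hx : x ≠ 0) : mcpProxObj ζ β v 0 < mcpProxObj ζ β v x := by
  refine mcpProxObj_lt_of_tangent hζ hβ.le hβζ (s := v / β) ?_ ?_ ?_ hx
  · rwa [abs_div, abs_of_pos hβ, div_le_one hβ]
  · rw [mcp, if_pos (by simp only [abs_zero]; positivity)]
    ring
  · field_simp
    ring

theorem mcpProxObj_shrink_lt (hζ : 0 < ζ) (hβ : 0 < β) (hβζ : β * ζ < 1 / 2) (hβv : β ≤ |v|)
    (hv : |v| ≤ 1 / (2 * ζ)) {x : ℝ} (hx : x ≠ (v - β * Real.sign v) / (1 - 2 * β * ζ)) :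
    mcpProxObj ζ β v ((v - β * Real.sign v) / (1 - 2 * β * ζ)) < mcpProxObj ζ β v x := by
  set s := Real.sign v
  have hv0 : v ≠ 0 := abs_pos.1 (hβ.trans_le hβv)
  obtain ⟨hs, hsv⟩ : |s| = 1 ∧ s * |v| = v := by
    rcases lt_or_gt_of_ne hv0 with h | h
    · simp [s, Real.sign_of_neg h, abs_of_neg h]
    · simp [s, Real.sign_of_pos h, abs_of_pos h]
  have hden : 0 < 1 - 2 * β * ζ := by linarith
  set r := (|v| - β) / (1 - 2 * β * ζ)
  have hr_mul : r * (1 - 2 * β * ζ) = |v| - β := div_mul_cancel₀ _ hden.ne'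
  have hr0 : 0 ≤ r := div_nonneg (by linarith) hden.le
  have hr : r ≤ 1 / (2 * ζ) := by
    rw [div_le_div_iff₀ hden (by positivity)]
    have : 2 * ζ * |v| ≤ 1 := by rwa [le_div_iff₀ (by positivity), mul_comm] at hv
    linarith
  have hsr : (v - β * s) / (1 - 2 * β * ζ) = s * r := by
    rw [← hsv]
    ring
  have habs : |s * r| = r := by rw [abs_mul, hs, one_mul, abs_of_nonneg hr0]
  rw [hsr] at hx ⊢
  refine mcpProxObj_lt_of_tangent hζ hβ.le hβζ hs.le ?_ ?_ hx
  · have hs2 : s ^ 2 = 1 := by rw [← sq_abs, hs, one_pow]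
    rw [mcp, if_pos (habs.symm ▸ hr), habs]
    linear_combination (-r) * hs2
  · rw [← hsv]
    linear_combination s * hr_mul

theorem mcpProxObj_self_lt (hζ : 0 < ζ) (hβζ : β * ζ ≤ 1 / 2) (hv : 1 / (2 * ζ) < |v|) {x : ℝ}
    (hx : x ≠ v) : mcpProxObj ζ β v v < mcpProxObj ζ β v x := by
  have hxv : 0 < (x - v) ^ 2 := sq_pos_of_ne_zero (sub_ne_zero.2 hx)
  simp only [mcpProxObj, mcp, if_neg (not_le.2 hv), sub_self]
  split_ifs with hxT
  · have hmcp : |x| - ζ * x ^ 2 = 1 / (4 * ζ) - ζ * (1 / (2 * ζ) - |x|) ^ 2 := by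
      rw [← sq_abs x]
      field_simp
      ring
    have hclose : (1 / (2 * ζ) - |x|) ^ 2 < (x - v) ^ 2 := by
      rw [← sq_abs (x - v)]
      refine pow_lt_pow_left₀ ?_ (by linarith) two_ne_zero
      linarith [abs_sub_abs_le_abs_sub v x, abs_sub_comm v x]
    rw [hmcp]
    linarith [mul_le_mul_of_nonneg_right hβζ (sq_nonneg (1 / (2 * ζ) - |x|))]
  · linarith

end

theorem firmShrinkage_is_prox (ζ β : ℝ) (hζ : 0 < ζ) (hβ : 0 < β)
    (hβζ : β * ζ < 1 / 2) (v : ℝ) :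
    StrictConvexOn ℝ Set.univ (fun x => β * mcp ζ x + (1 / 2) * (x - v) ^ 2) ∧
      ∀ x : ℝ, x ≠ firmShrinkage ζ β v →
        β * mcp ζ (firmShrinkage ζ β v) + (1 / 2) * (firmShrinkage ζ β v - v) ^ 2 <
          β * mcp ζ x + (1 / 2) * (x - v) ^ 2 := by
  refine ⟨strictConvexOn_mcpProxObj hζ hβ.le hβζ, fun x hx => ?_⟩
  change mcpProxObj ζ β v _ < mcpProxObj ζ β v x
  unfold firmShrinkage at hx ⊢
  split_ifs at hx ⊢ with hthreshold hinner
  · exact mcpProxObj_zero_lt hζ hβ hβζ hthreshold.le hx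
  · exact mcpProxObj_shrink_lt hζ hβ hβζ (not_lt.1 hthreshold) hinner hx
  · exact mcpProxObj_self_lt hζ hβζ.le (not_le.1 hinner) hx
end
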